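/- arXiv:1312.4054 — 2 statements merged into one kernel-verified Lean document; each statement's English description precedes it below -/
import Mathlib

section
/- For every real t > 1/2 and every real μ ≥ 0, the sum over integers m ∈ ℤ of (1+μ+2m²)^{-t} (1 + (1 + (1/2)·log(1+2|m|))²) is bounded by C(t)·(1+μ)^{1/2+ε-t} for any ε > 0 and some constant C(t,ε) depending only on t and ε. -/
/-!
Since `1 + μ + 2m²` dominates both `1 + μ` and `1 + 2m²`, for any `1/2 < s ≤ min t (1/2 + ε)` the
`m`-th term is at most `(1 + μ)^(s - t)` times the `μ`-free term
`(1 + 2m²)^(-s) (1 + (1 + ½ log (1 + 2|m|))²)`. The logarithmic factor is `O((1 + 2m²)^(2δ))` for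
every `δ > 0`, so the `μ`-free series converges, and its sum serves as `C`.
-/

open Real Filter Asymptotics

lemma rpow_neg_le_rpow_sub_mul_rpow_neg {a b c s t : ℝ} (ha : 0 < a) (hb : 0 < b)
    (hac : a ≤ c) (hbc : b ≤ c) (hs : 0 ≤ s) (hst : s ≤ t) :
    c ^ (-t) ≤ a ^ (s - t) * b ^ (-s) := by
  calc c ^ (-t) = c ^ (s - t) * c ^ (-s) := by
        rw [← rpow_add (ha.trans_le hac)]; ring_nf
    _ ≤ a ^ (s - t) * b ^ (-s) := by
        have hc : 0 < c := ha.trans_le hac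
        exact mul_le_mul (rpow_le_rpow_of_nonpos ha hac (by linarith))
          (rpow_le_rpow_of_nonpos hb hbc (by linarith)) (by positivity) (by positivity)

lemma one_add_sq_one_add_half_log_le_mul_rpow {x δ : ℝ} (hx : 1 ≤ x) (hδ : 0 < δ) :
    1 + (1 + (1 / 2) * log x) ^ 2 ≤ (1 + (1 + 1 / (2 * δ)) ^ 2) * x ^ (2 * δ) := by
  set u := x ^ δ
  have hu : 1 ≤ u := one_le_rpow hx hδ.le
  have hlog : (1 / 2) * log x ≤ 1 / (2 * δ) * u := by
    have := log_le_rpow_div (x := x) (by linarith) hδ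
    rw [show 1 / (2 * δ) * u = (1 / 2) * (u / δ) by field_simp]
    linarith
  have hbase : 1 + (1 / 2) * log x ≤ (1 + 1 / (2 * δ)) * u := by
    have : 0 ≤ 1 / (2 * δ) := by positivity
    nlinarith
  have hsq : (1 + (1 / 2) * log x) ^ 2 ≤ ((1 + 1 / (2 * δ)) * u) ^ 2 :=
    pow_le_pow_left₀ (by have := log_nonneg hx; positivity) hbase 2
  have hu2 : x ^ (2 * δ) = u ^ 2 := by
    rw [mul_comm, rpow_mul (by linarith), rpow_two]
  rw [hu2]
  nlinarith

lemma summable_one_add_two_sq_rpow_neg {r : ℝ} (hr : 1 / 2 < r) :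
    Summable fun m : ℤ => (1 + 2 * (m : ℝ) ^ 2) ^ (-r) := by
  refine summable_of_isBigO (summable_abs_int_rpow (b := 2 * r) (by linarith)) ?_
  refine IsBigO.of_bound 1 ((eventually_cofinite_ne 0).mono fun m hm => ?_)
  have hm2 : 0 < (m : ℝ) ^ 2 := by positivity
  rw [one_mul, norm_of_nonneg (by positivity), norm_of_nonneg (by positivity),
    neg_mul_eq_mul_neg, rpow_mul (abs_nonneg _), rpow_two, sq_abs]
  exact rpow_le_rpow_of_nonpos hm2 (by linarith) (by linarith)

lemma summable_one_add_two_sq_rpow_neg_mul_log {s : ℝ} (hs : 1 / 2 < s) :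
    Summable fun m : ℤ => (1 + 2 * (m : ℝ) ^ 2) ^ (-s) *
      (1 + (1 + (1 / 2) * log (1 + 2 * |(m : ℝ)|)) ^ 2) := by
  obtain ⟨δ, hδ, hδs⟩ : ∃ δ : ℝ, 0 < δ ∧ 1 / 2 < s - 2 * δ :=
    ⟨(s - 1 / 2) / 4, by linarith, by linarith⟩
  set K := 1 + (1 + 1 / (2 * δ)) ^ 2
  refine ((summable_one_add_two_sq_rpow_neg (r := s - 2 * δ) (by linarith)).mul_left K
    ).of_nonneg_of_le (fun m => by positivity) fun m => ?_
  have hb : 0 < 1 + 2 * (m : ℝ) ^ 2 := by positivity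
  have habs : |(m : ℝ)| ≤ (m : ℝ) ^ 2 := by exact_mod_cast Int.natAbs_le_self_sq m
  calc (1 + 2 * (m : ℝ) ^ 2) ^ (-s) * (1 + (1 + (1 / 2) * log (1 + 2 * |(m : ℝ)|)) ^ 2)
      ≤ (1 + 2 * (m : ℝ) ^ 2) ^ (-s) * (K * (1 + 2 * |(m : ℝ)|) ^ (2 * δ)) := by
        gcongr
        exact one_add_sq_one_add_half_log_le_mul_rpow (by linarith [abs_nonneg (m : ℝ)]) hδ
    _ ≤ (1 + 2 * (m : ℝ) ^ 2) ^ (-s) * (K * (1 + 2 * (m : ℝ) ^ 2) ^ (2 * δ)) := by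
        gcongr
    _ = K * (1 + 2 * (m : ℝ) ^ 2) ^ (-(s - 2 * δ)) := by
        rw [mul_left_comm, ← rpow_add hb]; ring_nf

theorem tsum_pow_neg_t_log_bound (t : ℝ) (ht : 1 / 2 < t) (ε : ℝ) (hε : 0 < ε) :
    ∃ C : ℝ, 0 < C ∧ ∀ μ : ℝ, 0 ≤ μ →
      (∑' m : ℤ, (1 + μ + 2 * (m : ℝ) ^ 2) ^ (-t) *
          (1 + (1 + (1 / 2) * Real.log (1 + 2 * |(m : ℝ)|)) ^ 2)) ≤
        C * (1 + μ) ^ (1 / 2 + ε - t) := by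
  obtain ⟨s, hs, hst, hsε⟩ : ∃ s : ℝ, 1 / 2 < s ∧ s ≤ t ∧ s ≤ 1 / 2 + ε :=
    ⟨min t (1 / 2 + ε), lt_min ht (by linarith), min_le_left _ _, min_le_right _ _⟩
  set L : ℤ → ℝ := fun m => 1 + (1 + (1 / 2) * Real.log (1 + 2 * |(m : ℝ)|)) ^ 2
  have hF := summable_one_add_two_sq_rpow_neg_mul_log hs
  refine ⟨∑' m : ℤ, (1 + 2 * (m : ℝ) ^ 2) ^ (-s) * L m,
    hF.tsum_pos (fun m => by positivity) 0 (by simp), fun μ hμ => ?_⟩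
  have hterm : ∀ m : ℤ, (1 + μ + 2 * (m : ℝ) ^ 2) ^ (-t) * L m ≤
      (1 + μ) ^ (s - t) * ((1 + 2 * (m : ℝ) ^ 2) ^ (-s) * L m) := fun m => by
    rw [← mul_assoc]
    gcongr
    exact rpow_neg_le_rpow_sub_mul_rpow_neg (by linarith) (by positivity)
      (by nlinarith [sq_nonneg (m : ℝ)]) (by linarith) (by linarith) hst
  calc ∑' m : ℤ, (1 + μ + 2 * (m : ℝ) ^ 2) ^ (-t) * L m
      ≤ ∑' m : ℤ, (1 + μ) ^ (s - t) * ((1 + 2 * (m : ℝ) ^ 2) ^ (-s) * L m) :=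
        ((hF.mul_left _).of_nonneg_of_le (fun m => by positivity) hterm).tsum_le_tsum hterm
          (hF.mul_left _)
    _ = (∑' m : ℤ, (1 + 2 * (m : ℝ) ^ 2) ^ (-s) * L m) * (1 + μ) ^ (s - t) := by
        rw [tsum_mul_left, mul_comm]
    _ ≤ (∑' m : ℤ, (1 + 2 * (m : ℝ) ^ 2) ^ (-s) * L m) * (1 + μ) ^ (1 / 2 + ε - t) := by
        gcongr
        linarith
end

section
/- For ν ∈ (0,1) and m ≥ 1, the product ∏_{i=1}^{m} (2i-1-ν)/(2i-1+ν) is bounded above by C·(1+m)^{-ν} for a constant C depending only on an upper bound ν₀ < 1 for ν (uniformly for ν ∈ (0, ν₀]). -/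
/-!
Each factor is dominated by a power of a telescoping factor: for `a > 0` and `0 ≤ ν ≤ 1`,
`(a - ν)/(a + ν) ≤ a/(a + 2ν) ≤ (a/(a + 2))^ν`, the second step being Bernoulli's inequality
`(1 + 2/a)^ν ≤ 1 + 2ν/a`. With `a = 2i - 1` the product of `a/(a + 2)` telescopes to `1/(2m + 1)`,
so the product is at most `(2m + 1)^(-ν) ≤ (1 + m)^(-ν)`.
-/

open Finset Real

theorem prod_Icc_two_mul_sub_one_div_two_mul_add_one (m : ℕ) :
    ∏ i ∈ Icc 1 m, (2 * (i : ℝ) - 1) / (2 * i + 1) = (2 * (m : ℝ) + 1)⁻¹ := by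
  induction m with
  | zero => simp
  | succ n ih =>
    rw [prod_Icc_succ_top (Nat.le_add_left 1 n), ih]
    push_cast
    field_simp
    ring

section Factor

variable {a ν : ℝ}

theorem sub_div_add_le_div_add_two_mul (ha : 0 < a) (hν : 0 ≤ ν) :
    (a - ν) / (a + ν) ≤ a / (a + 2 * ν) := by
  rw [div_le_div_iff₀ (by linarith) (by linarith)]
  nlinarith [sq_nonneg ν]

theorem div_add_two_mul_le_rpow (ha : 0 < a) (hν : 0 ≤ ν) (hν1 : ν ≤ 1) :
    a / (a + 2 * ν) ≤ (a / (a + 2)) ^ ν := by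
  have bernoulli : ((a + 2) / a) ^ ν ≤ (a + 2 * ν) / a := by
    have h := rpow_one_add_le_one_add_mul_self (s := 2 / a)
      (by linarith [div_pos two_pos ha]) hν hν1
    rwa [show 1 + 2 / a = (a + 2) / a by field_simp,
      show 1 + ν * (2 / a) = (a + 2 * ν) / a by field_simp] at h
  rw [← inv_div (a + 2), ← inv_div (a + 2 * ν), inv_rpow (div_pos (by linarith) ha).le]
  exact inv_anti₀ (by positivity) bernoulli

theorem sub_div_add_le_rpow (ha : 0 < a) (hν : 0 ≤ ν) (hν1 : ν ≤ 1) :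
    (a - ν) / (a + ν) ≤ (a / (a + 2)) ^ ν :=
  (sub_div_add_le_div_add_two_mul ha hν).trans (div_add_two_mul_le_rpow ha hν hν1)

end Factor

theorem prod_Icc_le_two_mul_add_one_rpow_neg {ν : ℝ} (hν : 0 ≤ ν) (hν1 : ν ≤ 1) (m : ℕ) :
    ∏ i ∈ Icc 1 m, (2 * (i : ℝ) - 1 - ν) / (2 * i - 1 + ν) ≤ (2 * m + 1) ^ (-ν) := by
  have one_le : ∀ i ∈ Icc 1 m, (1 : ℝ) ≤ i := fun i hi => by
    exact_mod_cast (mem_Icc.mp hi).1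
  calc ∏ i ∈ Icc 1 m, (2 * (i : ℝ) - 1 - ν) / (2 * i - 1 + ν)
      ≤ ∏ i ∈ Icc 1 m, ((2 * (i : ℝ) - 1) / (2 * i + 1)) ^ ν := by
        refine prod_le_prod (fun i hi => ?_) (fun i hi => ?_)
        · have := one_le i hi
          exact div_nonneg (by linarith) (by linarith)
        · have h := sub_div_add_le_rpow (a := 2 * (i : ℝ) - 1) (by linarith [one_le i hi]) hν hν1
          rwa [show 2 * (i : ℝ) - 1 + 2 = 2 * i + 1 by ring] at h
    _ = (∏ i ∈ Icc 1 m, (2 * (i : ℝ) - 1) / (2 * i + 1)) ^ ν := by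
        refine finsetProd_rpow _ _ (fun i hi => ?_) ν
        have := one_le i hi
        exact div_nonneg (by linarith) (by linarith)
    _ = (2 * m + 1) ^ (-ν) := by
        rw [prod_Icc_two_mul_sub_one_div_two_mul_add_one, inv_rpow (by positivity),
          rpow_neg (by positivity)]

theorem complementary_series_product_bound_general
    (ν₀ : ℝ) (h1 : ν₀ < 1) :
    ∃ C : ℝ, 0 < C ∧ ∀ ν : ℝ, 0 < ν → ν ≤ ν₀ → ∀ m : ℕ, 1 ≤ m →
      (∏ i ∈ Finset.Icc 1 m, (2 * (i : ℝ) - 1 - ν) / (2 * (i : ℝ) - 1 + ν)) ≤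
        C * (1 + (m : ℝ)) ^ (-ν) := by
  refine ⟨1, one_pos, fun ν hν hν₀ m _ => ?_⟩
  calc ∏ i ∈ Icc 1 m, (2 * (i : ℝ) - 1 - ν) / (2 * i - 1 + ν)
      ≤ (2 * m + 1) ^ (-ν) := prod_Icc_le_two_mul_add_one_rpow_neg hν.le (by linarith) m
    _ ≤ 1 * (1 + (m : ℝ)) ^ (-ν) := by
        rw [one_mul]
        exact rpow_le_rpow_of_nonpos (by positivity) (by linarith [m.cast_nonneg (α := ℝ)])
          (by linarith)

theorem complementary_series_product_bound
    (ν₀ : ℝ) (h0 : 0 < ν₀) (h1 : ν₀ < 1) :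
    ∃ C : ℝ, 0 < C ∧ ∀ ν : ℝ, 0 < ν → ν ≤ ν₀ → ∀ m : ℕ, 1 ≤ m →
      (∏ i ∈ Finset.Icc 1 m, (2 * (i : ℝ) - 1 - ν) / (2 * (i : ℝ) - 1 + ν)) ≤
        C * (1 + (m : ℝ)) ^ (-ν) :=
  complementary_series_product_bound_general ν₀ h1
end
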